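/- arXiv:1902.06869 — 4 statements merged into one kernel-verified Lean document; each statement's English description precedes it below -/
import Mathlib

section
/- Let m > 0, a₁ ≥ 0, a₂ ≥ 0, and 0 ≤ b < c. Then the integral ∫₀^∞ x·exp(−c x²)·I₀(a₁x)·I₀(a₂x)·₁F₁(m,1;b x²) dx converges and equals the absolutely convergent series ∑_{k=0}^∞ (k!/(2c^{k+1})) · ∑_{i=0}^{k} ∑_{n=0}^{i} [(m)_{k−i} b^{k−i}/((k−i)!)²] · [(a₁/2)^{2n}/(n!)²] · [(a₂/2)^{2(i−n)}/((i−n)!)²]. -/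
open MeasureTheory

/-- Pochhammer symbol (ascending factorial) `(m)_k = m (m+1) ⋯ (m+k-1)`. -/
noncomputable def poch (m : ℝ) (k : ℕ) : ℝ := ∏ j ∈ Finset.range k, (m + j)

/-- Modified Bessel function of the first kind of order zero,
`I₀(y) = ∑ (y/2)^{2n} / (n!)²`. -/
noncomputable def I0 (y : ℝ) : ℝ := ∑' n : ℕ, (y / 2) ^ (2 * n) / (Nat.factorial n : ℝ) ^ 2

/-- Confluent hypergeometric function `₁F₁(m, 1; z) = ∑ (m)_n zⁿ / (n!)²`. -/
noncomputable def F11 (m z : ℝ) : ℝ := ∑' n : ℕ, poch m n * z ^ n / (Nat.factorial n : ℝ) ^ 2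

/-!
In the variable `y = x²`, both `I₀(a x)` and `₁F₁(m, 1; b x²)` are power series whose
coefficients are bounded by `K θⁿ / n!`, for any `θ > 0` and any `θ > b` respectively (for
`₁F₁` by the ratio test). Such exponential-type bounds multiply under Cauchy products
(binomial theorem), so the integrand is `∑ G_k x^{2k+1} e^{-c x²}` with `|G_k| ≤ K θᵏ / k!`
for some `θ < c`. The termwise bounds sum to `K x e^{-(c-θ) x²}`, which is integrable, so
dominated convergence integrates termwise, with
`∫₀^∞ x^{2k+1} e^{-c x²} dx = k! / (2 c^{k+1})`.
-/

open Filter Finset Real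
open scoped Nat

lemma Real.hasSum_pow_div_factorial (x : ℝ) : HasSum (fun n => x ^ n / n !) (exp x) :=
  Real.exp_eq_exp_ℝ ▸ NormedSpace.expSeries_div_hasSum_exp x

lemma add_pow_div_factorial (x y : ℝ) (k : ℕ) :
    (x + y) ^ k / k ! = ∑ i ∈ range (k + 1), x ^ i / i ! * (y ^ (k - i) / (k - i)!) := by
  rw [add_pow, sum_div]
  refine sum_congr rfl fun i hi => ?_
  rw [Nat.cast_choose ℝ (Nat.lt_succ_iff.mp (mem_range.mp hi))]
  field_simp

lemma poch_pos {m : ℝ} (hm : 0 < m) (k : ℕ) : 0 < poch m k :=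
  prod_pos fun _ _ => by positivity

lemma exists_poch_mul_pow_div_factorial_le {m b θ : ℝ} (hm : 0 < m) (hb : 0 ≤ b)
    (hbθ : b < θ) :
    ∃ K, ∀ n, poch m n * b ^ n / n ! ≤ K * θ ^ n := by
  have hθ : 0 < θ := hb.trans_lt hbθ
  set u : ℕ → ℝ := fun n => poch m n * b ^ n / n ! / θ ^ n
  obtain ⟨ρ, hbρ, hρθ⟩ := exists_between hbθ
  have hu : ∀ n, u (n + 1) = (m + n) * b / (n + 1) / θ * u n := fun n => by
    simp only [u, poch, prod_range_succ, Nat.factorial_succ, pow_succ, Nat.cast_mul]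
    field_simp
    push_cast
    ring
  -- the ratio of consecutive terms of `u` tends to `b / θ < ρ / θ`
  have hratio : ∀ᶠ n in atTop, ‖u (n + 1)‖ ≤ ρ / θ * ‖u n‖ := by
    obtain ⟨N, hN⟩ := exists_nat_ge (m * b / (ρ - b))
    filter_upwards [eventually_ge_atTop N] with n hn
    have hn' : m * b ≤ n * (ρ - b) := by
      rw [div_le_iff₀ (by linarith)] at hN
      exact hN.trans (by gcongr)
    have : (m + n) * b / (n + 1) ≤ ρ := by
      rw [div_le_iff₀ (by positivity)]
      linarith
    rw [hu, norm_mul, Real.norm_of_nonneg (by have := poch_pos hm n; positivity)]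
    gcongr
  obtain ⟨K, hK⟩ := (summable_of_ratio_norm_eventually_le ((div_lt_one hθ).2 hρθ)
    hratio).tendsto_atTop_zero.bddAbove_range
  exact ⟨K, fun n => (div_le_iff₀ (by positivity)).1 (hK ⟨n, rfl⟩)⟩

def cauchyProduct (a b : ℕ → ℝ) (k : ℕ) : ℝ := ∑ i ∈ range (k + 1), a i * b (k - i)

section ExponentialType

variable {a b : ℕ → ℝ} {K L θ η : ℝ}

lemma summable_norm_mul_pow_of_abs_le (ha : ∀ n, |a n| ≤ K * θ ^ n / n !) (y : ℝ) :
    Summable fun n => ‖a n * y ^ n‖ := by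
  refine .of_nonneg_of_le (fun _ => norm_nonneg _) (fun n => ?_)
    ((Real.summable_pow_div_factorial (θ * |y|)).mul_left K)
  rw [norm_mul, norm_pow, Real.norm_eq_abs, Real.norm_eq_abs, mul_pow, ← mul_div_assoc,
    mul_div_right_comm, ← mul_assoc]
  gcongr
  exact (ha n).trans_eq (by ring)

lemma abs_cauchyProduct_le (ha : ∀ n, |a n| ≤ K * θ ^ n / n !)
    (hb : ∀ n, |b n| ≤ L * η ^ n / n !) (k : ℕ) :
    |cauchyProduct a b k| ≤ K * L * (θ + η) ^ k / k ! := by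
  rw [mul_div_assoc, add_pow_div_factorial, mul_sum]
  refine (abs_sum_le_sum_abs _ _).trans (sum_le_sum fun i _ => ?_)
  rw [abs_mul]
  calc |a i| * |b (k - i)| ≤ K * θ ^ i / i ! * (L * η ^ (k - i) / (k - i)!) :=
        mul_le_mul (ha i) (hb _) (abs_nonneg _) ((abs_nonneg _).trans (ha i))
    _ = K * L * (θ ^ i / i ! * (η ^ (k - i) / (k - i)!)) := by ring

lemma hasSum_cauchyProduct_mul_pow {y : ℝ} (ha : Summable fun n => ‖a n * y ^ n‖)
    (hb : Summable fun n => ‖b n * y ^ n‖) :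
    HasSum (fun k => cauchyProduct a b k * y ^ k)
      ((∑' n, a n * y ^ n) * ∑' n, b n * y ^ n) := by
  have hterm (k : ℕ) : cauchyProduct a b k * y ^ k =
      ∑ i ∈ range (k + 1), a i * y ^ i * (b (k - i) * y ^ (k - i)) := by
    rw [cauchyProduct, sum_mul]
    refine sum_congr rfl fun i hi => ?_
    rw [← pow_sub_mul_pow y (Nat.lt_succ_iff.mp (mem_range.mp hi))]
    ring
  simpa only [hterm] using hasSum_sum_range_mul_of_summable_norm ha hb

end ExponentialType

open Set in
lemma integral_pow_mul_exp_neg_mul_sq {c : ℝ} (hc : 0 < c) (k : ℕ) :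
    ∫ x in Ioi (0 : ℝ), x ^ (2 * k + 1) * exp (-c * x ^ 2) = k ! / (2 * c ^ (k + 1)) := by
  have h := integral_rpow_mul_exp_neg_mul_rpow two_pos (q := ((2 * k + 1 : ℕ) : ℝ))
    (neg_one_lt_zero.trans_le (Nat.cast_nonneg _)) hc
  simp only [Real.rpow_natCast, Real.rpow_two] at h
  have hexp : ((2 * k + 1 : ℕ) + 1 : ℝ) / 2 = (k + 1 : ℕ) := by push_cast; ring
  rw [h, neg_div, hexp, Real.rpow_neg hc.le, Real.rpow_natCast, Nat.cast_succ,
    Real.Gamma_nat_eq_factorial]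
  field_simp

noncomputable def besselCoeff (a : ℝ) (n : ℕ) : ℝ := (a / 2) ^ (2 * n) / (n ! : ℝ) ^ 2

noncomputable def kummerCoeff (m b : ℝ) (n : ℕ) : ℝ := poch m n * b ^ n / (n ! : ℝ) ^ 2

lemma I0_mul_eq_tsum (a x : ℝ) : I0 (a * x) = ∑' n, besselCoeff a n * (x ^ 2) ^ n := by
  simp only [I0, besselCoeff, div_mul_eq_mul_div, ← pow_mul, ← mul_pow]

lemma F11_mul_sq_eq_tsum (m b x : ℝ) :
    F11 m (b * x ^ 2) = ∑' n, kummerCoeff m b n * (x ^ 2) ^ n := by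
  simp only [F11, kummerCoeff, div_mul_eq_mul_div, mul_pow, mul_assoc]

lemma abs_besselCoeff_le (a : ℝ) {η : ℝ} (hη : 0 < η) (n : ℕ) :
    |besselCoeff a n| ≤ exp ((a / 2) ^ 2 / η) * η ^ n / n ! := by
  have hsplit : besselCoeff a n = ((a / 2) ^ 2 / η) ^ n / n ! * (η ^ n / n !) := by
    rw [besselCoeff, pow_mul, div_mul_div_comm, ← mul_pow, div_mul_cancel₀ _ hη.ne', ← sq]
  rw [hsplit, abs_of_nonneg (by positivity), mul_div_assoc]
  gcongr
  exact Real.pow_div_factorial_le_exp _ (by positivity) n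

lemma exists_abs_kummerCoeff_le {m b θ : ℝ} (hm : 0 < m) (hb : 0 ≤ b) (hbθ : b < θ) :
    ∃ K, ∀ n, |kummerCoeff m b n| ≤ K * θ ^ n / n ! := by
  obtain ⟨K, hK⟩ := exists_poch_mul_pow_div_factorial_le hm hb hbθ
  refine ⟨K, fun n => ?_⟩
  rw [abs_of_nonneg (by have := poch_pos hm n; unfold kummerCoeff; positivity), kummerCoeff, sq,
    ← div_div]
  exact div_le_div_of_nonneg_right (hK n) (by positivity)

open Set in
theorem integrableOn_and_hasSum_integral_tsum_pow_mul_exp_neg_mul_sq {G : ℕ → ℝ}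
    {K θ c : ℝ} (hG : ∀ k, |G k| ≤ K * θ ^ k / k !) (hθ : 0 ≤ θ) (hθc : θ < c) :
    IntegrableOn (fun x => ∑' k, G k * (x ^ (2 * k + 1) * exp (-c * x ^ 2))) (Ioi 0) ∧
    HasSum (fun k => k ! / (2 * c ^ (k + 1)) * G k)
      (∫ x in Ioi 0, ∑' k, G k * (x ^ (2 * k + 1) * exp (-c * x ^ 2))) := by
  have hc : 0 < c := hθ.trans_lt hθc
  set f : ℕ → ℝ → ℝ := fun k x => G k * (x ^ (2 * k + 1) * exp (-c * x ^ 2))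
  set bound : ℕ → ℝ → ℝ := fun k x =>
    K * θ ^ k / k ! * (x ^ (2 * k + 1) * exp (-c * x ^ 2))
  have hf_le (k : ℕ) (x : ℝ) (hx : 0 < x) : ‖f k x‖ ≤ bound k x := by
    rw [norm_mul, Real.norm_eq_abs, Real.norm_of_nonneg (by positivity)]
    exact mul_le_mul_of_nonneg_right (hG k) (by positivity)
  have hbound_sum (x : ℝ) : HasSum (fun k => bound k x) (K * (x * exp (-(c - θ) * x ^ 2))) := by
    have hval :
        K * (x * exp (-(c - θ) * x ^ 2)) = K * x * exp (-c * x ^ 2) * exp (θ * x ^ 2) := by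
      rw [mul_assoc (K * x), ← Real.exp_add]
      ring_nf
    rw [hval]
    exact ((Real.hasSum_pow_div_factorial _).mul_left _).congr_fun fun k => by
      simp only [bound]
      ring
  have hf_sum : ∀ x ∈ Ioi (0 : ℝ), HasSum (fun k => f k x) (∑' k, f k x) := fun x hx =>
    (Summable.of_norm_bounded (hbound_sum x).summable (hf_le · x hx)).hasSum
  have hbound_int : IntegrableOn (fun x => ∑' k, bound k x) (Ioi 0) := by
    simp only [fun x => (hbound_sum x).tsum_eq]
    exact ((integrable_mul_exp_neg_mul_sq (sub_pos.2 hθc)).const_mul K).integrableOn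
  have hf_meas (k : ℕ) : AEStronglyMeasurable (f k) (volume.restrict (Ioi 0)) :=
    (by fun_prop : Continuous (f k)).aestronglyMeasurable
  refine ⟨hbound_int.mono' ?_ ?_, ?_⟩
  · refine aestronglyMeasurable_of_tendsto_ae atTop
      (f := fun N x => ∑ k ∈ range N, f k x) (fun N => ?_) ?_
    · exact (by fun_prop : Continuous fun x => ∑ k ∈ range N, f k x).aestronglyMeasurable
    · exact ae_restrict_of_forall_mem measurableSet_Ioi fun x hx => (hf_sum x hx).tendsto_sum_nat
  · exact ae_restrict_of_forall_mem measurableSet_Ioi fun x hx =>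
      (hf_sum x hx).norm_le_of_bounded (hbound_sum x).summable.hasSum (hf_le · x hx)
  · refine (hasSum_integral_of_dominated_convergence bound hf_meas
      (fun k => ae_restrict_of_forall_mem measurableSet_Ioi (hf_le k))
      (Eventually.of_forall fun x => (hbound_sum x).summable) hbound_int
      (ae_restrict_of_forall_mem measurableSet_Ioi hf_sum)).congr_fun fun k => ?_
    rw [integral_const_mul, integral_pow_mul_exp_neg_mul_sq hc, mul_comm]

lemma cauchyProduct_besselCoeff_kummerCoeff (m a₁ a₂ b : ℝ) (k : ℕ) :
    cauchyProduct (cauchyProduct (besselCoeff a₁) (besselCoeff a₂)) (kummerCoeff m b) k =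
      ∑ i ∈ range (k + 1), ∑ n ∈ range (i + 1),
        kummerCoeff m b (k - i) * besselCoeff a₁ n * besselCoeff a₂ (i - n) := by
  simp only [cauchyProduct, sum_mul]
  exact sum_congr rfl fun i _ => sum_congr rfl fun n _ => by ring

theorem integral_I0_I0_F11_general (m a₁ a₂ b c : ℝ) (hm : 0 < m)
    (hb : 0 ≤ b) (hbc : b < c) :
    IntegrableOn (fun x : ℝ =>
      x * Real.exp (-c * x ^ 2) * I0 (a₁ * x) * I0 (a₂ * x) * F11 m (b * x ^ 2))
      (Set.Ioi 0) ∧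
    Summable (fun k : ℕ =>
      ((Nat.factorial k : ℝ) / (2 * c ^ (k + 1))) *
        ∑ i ∈ Finset.range (k + 1), ∑ n ∈ Finset.range (i + 1),
          (poch m (k - i) * b ^ (k - i) / (Nat.factorial (k - i) : ℝ) ^ 2) *
          ((a₁ / 2) ^ (2 * n) / (Nat.factorial n : ℝ) ^ 2) *
          ((a₂ / 2) ^ (2 * (i - n)) / (Nat.factorial (i - n) : ℝ) ^ 2)) ∧
    (∫ x in Set.Ioi (0 : ℝ),
        x * Real.exp (-c * x ^ 2) * I0 (a₁ * x) * I0 (a₂ * x) * F11 m (b * x ^ 2)) =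
      ∑' k : ℕ,
        ((Nat.factorial k : ℝ) / (2 * c ^ (k + 1))) *
          ∑ i ∈ Finset.range (k + 1), ∑ n ∈ Finset.range (i + 1),
            (poch m (k - i) * b ^ (k - i) / (Nat.factorial (k - i) : ℝ) ^ 2) *
            ((a₁ / 2) ^ (2 * n) / (Nat.factorial n : ℝ) ^ 2) *
            ((a₂ / 2) ^ (2 * (i - n)) / (Nat.factorial (i - n) : ℝ) ^ 2) := by
  obtain ⟨θ, hbθ, hθc⟩ := exists_between hbc
  obtain ⟨K, hK⟩ := exists_abs_kummerCoeff_le hm hb hbθ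
  have hη : 0 < (c - θ) / 4 := by linarith
  have h₁ := abs_besselCoeff_le a₁ hη
  have h₂ := abs_besselCoeff_le a₂ hη
  have h₁₂ := abs_cauchyProduct_le h₁ h₂
  have hexpand (x : ℝ) :
      x * exp (-c * x ^ 2) * I0 (a₁ * x) * I0 (a₂ * x) * F11 m (b * x ^ 2) =
        ∑' k, cauchyProduct (cauchyProduct (besselCoeff a₁) (besselCoeff a₂))
          (kummerCoeff m b) k * (x ^ (2 * k + 1) * exp (-c * x ^ 2)) := by
    rw [I0_mul_eq_tsum, I0_mul_eq_tsum, F11_mul_sq_eq_tsum, mul_assoc (x * exp _),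
      ← (hasSum_cauchyProduct_mul_pow (summable_norm_mul_pow_of_abs_le h₁ _)
        (summable_norm_mul_pow_of_abs_le h₂ _)).tsum_eq, mul_assoc,
      ← (hasSum_cauchyProduct_mul_pow (summable_norm_mul_pow_of_abs_le h₁₂ _)
        (summable_norm_mul_pow_of_abs_le hK _)).tsum_eq, ← tsum_mul_left]
    exact tsum_congr fun k => by ring
  obtain ⟨hint, hsum⟩ := integrableOn_and_hasSum_integral_tsum_pow_mul_exp_neg_mul_sq (c := c)
    (abs_cauchyProduct_le h₁₂ hK) (by linarith) (by linarith)
  simp only [hexpand, cauchyProduct_besselCoeff_kummerCoeff] at hint hsum ⊢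
  exact ⟨hint, hsum.summable, hsum.tsum_eq.symm⟩

theorem integral_I0_I0_F11 (m a₁ a₂ b c : ℝ) (hm : 0 < m) (ha₁ : 0 ≤ a₁) (ha₂ : 0 ≤ a₂)
    (hb : 0 ≤ b) (hbc : b < c) :
    IntegrableOn (fun x : ℝ =>
      x * Real.exp (-c * x ^ 2) * I0 (a₁ * x) * I0 (a₂ * x) * F11 m (b * x ^ 2))
      (Set.Ioi 0) ∧
    Summable (fun k : ℕ =>
      ((Nat.factorial k : ℝ) / (2 * c ^ (k + 1))) *
        ∑ i ∈ Finset.range (k + 1), ∑ n ∈ Finset.range (i + 1),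
          (poch m (k - i) * b ^ (k - i) / (Nat.factorial (k - i) : ℝ) ^ 2) *
          ((a₁ / 2) ^ (2 * n) / (Nat.factorial n : ℝ) ^ 2) *
          ((a₂ / 2) ^ (2 * (i - n)) / (Nat.factorial (i - n) : ℝ) ^ 2)) ∧
    (∫ x in Set.Ioi (0 : ℝ),
        x * Real.exp (-c * x ^ 2) * I0 (a₁ * x) * I0 (a₂ * x) * F11 m (b * x ^ 2)) =
      ∑' k : ℕ,
        ((Nat.factorial k : ℝ) / (2 * c ^ (k + 1))) *
          ∑ i ∈ Finset.range (k + 1), ∑ n ∈ Finset.range (i + 1),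
            (poch m (k - i) * b ^ (k - i) / (Nat.factorial (k - i) : ℝ) ^ 2) *
            ((a₁ / 2) ^ (2 * n) / (Nat.factorial n : ℝ) ^ 2) *
            ((a₂ / 2) ^ (2 * (i - n)) / (Nat.factorial (i - n) : ℝ) ^ 2) :=
  integral_I0_I0_F11_general m a₁ a₂ b c hm hb hbc
end

section
/- Let σ > 0, 0 < ρ < 1, m > 0, K > 0, and γ ≥ 0. Then the marginal CDF of R₁, given by F_{R₁}(γ) = ∫₀^∞ ∫₀^γ f(r₁,r₂) dr₁ dr₂, equals the convergent series ∑_{k=0}^∞ ∑_{i=0}^{k} ∑_{n=0}^{i} ∑_{j=0}^∞ α(k,i,n) G(j,n,i−n,γ). -/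
open MeasureTheory

/-- Series coefficient `α(k,i,n)` of the bivariate Rician shadowed joint PDF. -/
noncomputable def alpha (σ ρ m K : ℝ) (k i n : ℕ) : ℝ :=
  (8 * Real.rpow (m * ρ / (m * ρ + K)) m / (σ ^ 6 * ρ * (1 - ρ) ^ 2)) *
  (poch m (k - i) * (K / (σ ^ 2 * ρ * (ρ * m + K))) ^ (k - i) /
    (Nat.factorial (k - i) : ℝ) ^ 2) *
  (1 / ((Nat.factorial n : ℝ) ^ 2 * (Nat.factorial (i - n) : ℝ) ^ 2 *
    (σ ^ 2 * (1 - ρ)) ^ (2 * i))) *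
  ((Nat.factorial k : ℝ) / (2 * ((1 + ρ) / (σ ^ 2 * ρ * (1 - ρ))) ^ (k + 1)))

/-- Closed-form power series of the bivariate Rician shadowed joint PDF. -/
noncomputable def fpdf (σ ρ m K r₁ r₂ : ℝ) : ℝ :=
  ∑' k : ℕ, ∑ i ∈ Finset.range (k + 1), ∑ n ∈ Finset.range (i + 1),
    alpha σ ρ m K k i n * r₁ ^ (2 * n + 1) * r₂ ^ (2 * (i - n) + 1) *
      Real.exp (-(r₁ ^ 2 + r₂ ^ 2) / (σ ^ 2 * (1 - ρ)))

/-- `G(j,l,q,γ) = (−1)^j γ^{2(l+j+1)} q! (σ²(1−ρ))^{q+1−j} / (j!·4(l+j+1))`. -/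
noncomputable def Gfun (σ ρ : ℝ) (j l q : ℕ) (γ : ℝ) : ℝ :=
  (-1 : ℝ) ^ j * γ ^ (2 * (l + j + 1)) * (Nat.factorial q : ℝ) *
    (σ ^ 2 * (1 - ρ)) ^ ((q : ℤ) + 1 - (j : ℤ)) /
    ((Nat.factorial j : ℝ) * (4 * (l + j + 1)))

/-- `Ḡ(λ,k)`, the `(2(k+1))`-th moment of the BPP distance distribution. -/
noncomputable def Gbar (Dalt ra lam : ℝ) (k : ℕ) : ℝ :=
  ((Dalt ^ 2 + lam ^ 2 + ra ^ 2) ^ (k + 2) - (Dalt ^ 2 + lam ^ 2) ^ (k + 2)) /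
    (ra ^ 2 * (k + 2))

/-! With `c = σ²(1 - ρ)` and `φ_q(r) = r^(2q+1) e^(-r²/c)`, the `(k,i,n)` term of the density is
`α(k,i,n) φ_n(r₁) φ_(i-n)(r₂)`. All terms are nonnegative, so both integrations commute with the
sum over `k` once the integrated series converges. Since `φ_q(r) ≤ q! c^q r` and
`∫₀^∞ φ_q = q! c^(q+1) / 2`, convergence reduces to that of
`∑_(i,n) α(k,i,n) n! cⁿ (i-n)! c^(i-n)`; by `(m)_j / j! ≤ (j+N choose N)` for `m ≤ N + 1` and the
binomial theorem this is at most `α(0,0,0) (k+N choose N) rᵏ` with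
`r = (2/c + K/(σ²ρ(ρm+K))) / ((1+ρ)/(σ²ρ(1-ρ))) < 1`.
Finally, expanding `e^(-r²/c)` gives `∫₀^γ φ_l` as an alternating series, whose product with
`∫₀^∞ φ_q` is `∑_j G(j,l,q,γ)`. -/

open Set
open scoped Nat

noncomputable def gaussOddPow (c : ℝ) (q : ℕ) (r : ℝ) : ℝ :=
  r ^ (2 * q + 1) * Real.exp (-r ^ 2 / c)

namespace gaussOddPow

variable {c : ℝ}

lemma nonneg (q : ℕ) {r : ℝ} (hr : 0 ≤ r) : 0 ≤ gaussOddPow c q r := by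
  unfold gaussOddPow; positivity

lemma continuous (q : ℕ) : Continuous (gaussOddPow c q) := by
  unfold gaussOddPow; fun_prop

lemma le_factorial_mul (hc : 0 < c) (q : ℕ) {r : ℝ} (hr : 0 ≤ r) :
    gaussOddPow c q r ≤ q ! * c ^ q * r := by
  have hexp : (r ^ 2 / c) ^ q / q ! ≤ Real.exp (r ^ 2 / c) :=
    Real.pow_div_factorial_le_exp _ (by positivity) q
  rw [div_le_iff₀ (by positivity), div_pow, div_le_iff₀ (by positivity)] at hexp
  calc gaussOddPow c q r = (r ^ 2) ^ q * Real.exp (-r ^ 2 / c) * r := by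
        unfold gaussOddPow; ring
    _ ≤ Real.exp (r ^ 2 / c) * q ! * c ^ q * Real.exp (-r ^ 2 / c) * r := by gcongr
    _ = q ! * c ^ q * (Real.exp (r ^ 2 / c) * Real.exp (-r ^ 2 / c)) * r := by ring
    _ = q ! * c ^ q * r := by
        rw [← Real.exp_add, neg_div, add_neg_cancel, Real.exp_zero, mul_one]

lemma eq_rpow (q : ℕ) :
    gaussOddPow c q = fun r => r ^ ((2 * q + 1 : ℕ) : ℝ) * Real.exp (-c⁻¹ * r ^ (2 : ℝ)) := by
  ext r
  rw [Real.rpow_natCast, Real.rpow_two, gaussOddPow, neg_div, neg_mul, div_eq_inv_mul]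

lemma integrableOn_Ioi (hc : 0 < c) (q : ℕ) : IntegrableOn (gaussOddPow c q) (Ioi 0) := by
  rw [eq_rpow]
  exact integrableOn_rpow_mul_exp_neg_mul_rpow (neg_one_lt_zero.trans_le (Nat.cast_nonneg _))
    two_pos (inv_pos.2 hc)

lemma integral_Ioi (hc : 0 < c) (q : ℕ) :
    ∫ r in Ioi 0, gaussOddPow c q r = q ! * c ^ (q + 1) / 2 := by
  rw [eq_rpow, integral_rpow_mul_exp_neg_mul_rpow two_pos
      (neg_one_lt_zero.trans_le (Nat.cast_nonneg _)) (inv_pos.2 hc),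
    show (((2 * q + 1 : ℕ) : ℝ) + 1) / 2 = q + 1 by push_cast; ring,
    show -(((2 * q + 1 : ℕ) : ℝ) + 1) / 2 = ((-(q + 1 : ℕ) : ℤ) : ℝ) by push_cast; ring,
    Real.rpow_intCast, Real.Gamma_nat_eq_factorial, inv_zpow', neg_neg, zpow_natCast]
  ring

lemma intervalIntegral_le (hc : 0 < c) {γ : ℝ} (hγ : 0 ≤ γ) (q : ℕ) :
    ∫ r in 0..γ, gaussOddPow c q r ≤ q ! * c ^ (q + 1) / 2 := by
  rw [intervalIntegral.integral_of_le hγ, ← integral_Ioi hc q]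
  exact setIntegral_mono_set (integrableOn_Ioi hc q)
    ((ae_restrict_iff' measurableSet_Ioi).2 (.of_forall fun r hr => nonneg q (le_of_lt hr)))
    Ioc_subset_Ioi_self.eventuallyLE

lemma hasSum_intervalIntegral {γ : ℝ} (hγ : 0 ≤ γ) (l : ℕ) :
    HasSum (fun j : ℕ => (-c⁻¹) ^ j / j ! * (γ ^ (2 * (l + j + 1)) / (2 * (l + j + 1))))
      (∫ r in 0..γ, gaussOddPow c l r) := by
  have hterm (j : ℕ) : ∫ r in 0..γ, (-c⁻¹) ^ j / j ! * r ^ (2 * (l + j) + 1)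
      = (-c⁻¹) ^ j / j ! * (γ ^ (2 * (l + j + 1)) / (2 * (l + j + 1))) := by
    rw [intervalIntegral.integral_const_mul, integral_pow]
    congr 1
    rw [zero_pow (by omega)]
    push_cast
    ring_nf
  rw [← funext hterm]
  refine intervalIntegral.hasSum_integral_of_dominated_convergence
    (fun j _ => γ ^ (2 * l + 1) * ((γ ^ 2 / |c|) ^ j / j !))
    (fun j => (by fun_prop : Continuous _).aestronglyMeasurable) ?_
    (.of_forall fun _ _ => (Real.summable_pow_div_factorial _).mul_left _)
    intervalIntegrable_const ?_
  · refine fun j => .of_forall fun r hr => ?_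
    rw [uIoc_of_le hγ] at hr
    have hr0 : 0 ≤ r := hr.1.le
    rw [norm_mul, norm_div, norm_pow, norm_neg, norm_inv, Real.norm_eq_abs, Real.norm_natCast,
      Real.norm_of_nonneg (pow_nonneg hr0 _)]
    calc |c|⁻¹ ^ j / j ! * r ^ (2 * (l + j) + 1)
        ≤ |c|⁻¹ ^ j / j ! * γ ^ (2 * (l + j) + 1) := by gcongr; exact hr.2
      _ = γ ^ (2 * l + 1) * ((γ ^ 2 / |c|) ^ j / j !) := by ring
  · refine .of_forall fun r _ => ?_
    refine ((Real.exp_eq_exp_ℝ ▸ NormedSpace.expSeries_div_hasSum_exp (-r ^ 2 / c)).mul_left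
      (r ^ (2 * l + 1))).congr_fun fun j => ?_
    rw [div_pow, neg_pow, div_eq_mul_inv _ (c ^ j), ← inv_pow]
    ring

end gaussOddPow

lemma hasSum_Gfun {σ ρ γ : ℝ} (hc : 0 < σ ^ 2 * (1 - ρ)) (hγ : 0 ≤ γ) (l q : ℕ) :
    HasSum (fun j => Gfun σ ρ j l q γ) ((∫ r in 0..γ, gaussOddPow (σ ^ 2 * (1 - ρ)) l r) *
      ∫ r in Ioi 0, gaussOddPow (σ ^ 2 * (1 - ρ)) q r) := by
  rw [gaussOddPow.integral_Ioi hc]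
  refine ((gaussOddPow.hasSum_intervalIntegral hγ l).mul_right _).congr_fun fun j => ?_
  rw [Gfun, show (q : ℤ) + 1 - j = ((q + 1 : ℕ) : ℤ) - (j : ℕ) by push_cast; ring,
    zpow_sub₀ hc.ne', zpow_natCast, zpow_natCast, neg_pow (σ ^ 2 * (1 - ρ))⁻¹, inv_pow]
  field_simp
  ring

lemma poch_nonneg {m : ℝ} (hm : 0 ≤ m) (j : ℕ) : 0 ≤ poch m j :=
  Finset.prod_nonneg fun i _ => by positivity

lemma poch_div_factorial_le_choose {m : ℝ} {N : ℕ} (hm : 0 ≤ m) (hmN : m ≤ N + 1) (j : ℕ) :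
    poch m j / j ! ≤ (j + N).choose N := by
  have hasc : (((N + 1).ascFactorial j : ℕ) : ℝ) = j ! * (j + N).choose N := by
    rw [Nat.ascFactorial_eq_factorial_mul_choose, add_comm N j, ← Nat.choose_symm_add]
    push_cast; ring
  rw [div_le_iff₀ (by positivity), mul_comm, ← hasc, Nat.ascFactorial_eq_prod_range, poch]
  push_cast
  exact Finset.prod_le_prod (fun i _ => by positivity) fun i _ => by linarith

section alpha

variable {σ ρ m K : ℝ}

lemma alpha_nonneg (hρ0 : 0 ≤ ρ) (hρ1 : ρ ≤ 1) (hm : 0 ≤ m) (hK : 0 ≤ K) (k i n : ℕ) :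
    0 ≤ alpha σ ρ m K k i n := by
  have := poch_nonneg hm (k - i)
  have : 0 ≤ 1 - ρ := by linarith
  have := Real.rpow_nonneg (x := m * ρ / (m * ρ + K)) (by positivity) m
  unfold alpha
  positivity

-- `alpha σ ρ m K 0 0 0` is the constant prefactor of `α` divided by `2(1+ρ)/(σ²ρ(1-ρ))`.
lemma alpha_mul_factorial_mul_pow (hσ : σ ≠ 0) (hρ0 : 0 < ρ) (hρ1 : ρ < 1) {k i n : ℕ}
    (hn : n ≤ i) (hi : i ≤ k) :
    alpha σ ρ m K k i n *
        (n ! * (σ ^ 2 * (1 - ρ)) ^ n * ((i - n)! * (σ ^ 2 * (1 - ρ)) ^ (i - n)))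
      = alpha σ ρ m K 0 0 0 * (poch m (k - i) / (k - i)!) *
        ((1 + ρ) / (σ ^ 2 * ρ * (1 - ρ)))⁻¹ ^ k *
          (k.choose i * (K / (σ ^ 2 * ρ * (ρ * m + K))) ^ (k - i) *
            (i.choose n * (σ ^ 2 * (1 - ρ))⁻¹ ^ i)) := by
  obtain ⟨q, rfl⟩ : ∃ q, i = n + q := ⟨i - n, by omega⟩
  obtain ⟨d, rfl⟩ : ∃ d, k = n + q + d := ⟨k - (n + q), by omega⟩
  have hc : σ ^ 2 * (1 - ρ) ≠ 0 := mul_ne_zero (pow_ne_zero 2 hσ) (by linarith)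
  have hA : (1 + ρ) / (σ ^ 2 * ρ * (1 - ρ)) ≠ 0 :=
    div_ne_zero (by linarith) (mul_ne_zero (by positivity) (by linarith))
  simp only [alpha, Nat.cast_choose ℝ hn, Nat.cast_choose ℝ hi, Nat.add_sub_cancel_left,
    Nat.sub_self, poch, Finset.range_zero, Finset.prod_empty, Nat.factorial_zero]
  generalize (1 + ρ) / (σ ^ 2 * ρ * (1 - ρ)) = A at hA ⊢
  generalize σ ^ 2 * (1 - ρ) = c at hc ⊢
  generalize 8 * Real.rpow (m * ρ / (m * ρ + K)) m / (σ ^ 6 * ρ * (1 - ρ) ^ 2) = C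
  simp only [inv_pow]
  field_simp
  ring

lemma alpha_ratio_lt_one (hσ : σ ≠ 0) (hρ0 : 0 < ρ) (hρ1 : ρ < 1) (hm : 0 < m) (hK : 0 ≤ K) :
    (2 / (σ ^ 2 * (1 - ρ)) + K / (σ ^ 2 * ρ * (ρ * m + K))) /
      ((1 + ρ) / (σ ^ 2 * ρ * (1 - ρ))) < 1 := by
  have h1 : 0 < 1 - ρ := by linarith
  have hσ2 : 0 < σ ^ 2 := by positivity
  have hx : K / (σ ^ 2 * ρ * (ρ * m + K)) < 1 / (σ ^ 2 * ρ) := by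
    rw [div_lt_div_iff₀ (by positivity) (by positivity)]
    nlinarith [mul_pos (mul_pos hσ2 hρ0) (mul_pos hρ0 hm)]
  have hA : 1 / (σ ^ 2 * ρ) + 2 / (σ ^ 2 * (1 - ρ)) = (1 + ρ) / (σ ^ 2 * ρ * (1 - ρ)) := by
    field_simp; ring
  rw [div_lt_one (by positivity)]
  linarith

end alpha

noncomputable def alphaSum (σ ρ m K : ℝ) (w : ℕ → ℕ → ℝ) (k : ℕ) : ℝ :=
  ∑ i ∈ Finset.range (k + 1), ∑ n ∈ Finset.range (i + 1), alpha σ ρ m K k i n * w n (i - n)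

namespace alphaSum

variable {σ ρ m K : ℝ}

lemma nonneg (hα : ∀ k i n, 0 ≤ alpha σ ρ m K k i n) {w : ℕ → ℕ → ℝ} (hw : ∀ n q, 0 ≤ w n q)
    (k : ℕ) : 0 ≤ alphaSum σ ρ m K w k :=
  Finset.sum_nonneg fun i _ => Finset.sum_nonneg fun n _ => mul_nonneg (hα k i n) (hw n _)

lemma factorial_pow_le (hσ : σ ≠ 0) (hρ0 : 0 < ρ) (hρ1 : ρ < 1) (hm : 0 ≤ m) (hK : 0 ≤ K)
    {N : ℕ} (hmN : m ≤ N + 1) (k : ℕ) :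
    alphaSum σ ρ m K (fun n q => n ! * (σ ^ 2 * (1 - ρ)) ^ n * (q ! * (σ ^ 2 * (1 - ρ)) ^ q)) k
      ≤ alpha σ ρ m K 0 0 0 * ((k + N).choose N *
        ((2 / (σ ^ 2 * (1 - ρ)) + K / (σ ^ 2 * ρ * (ρ * m + K))) /
          ((1 + ρ) / (σ ^ 2 * ρ * (1 - ρ)))) ^ k) := by
  have hα := alpha_nonneg (σ := σ) hρ0.le hρ1.le hm hK
  have h1 : 0 < 1 - ρ := by linarith
  set c := σ ^ 2 * (1 - ρ)
  set A := (1 + ρ) / (σ ^ 2 * ρ * (1 - ρ))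
  set x := K / (σ ^ 2 * ρ * (ρ * m + K))
  have hc : 0 < c := by positivity
  have hx : 0 ≤ x := by positivity
  calc alphaSum σ ρ m K (fun n q => n ! * c ^ n * (q ! * c ^ q)) k
      ≤ ∑ i ∈ Finset.range (k + 1), ∑ n ∈ Finset.range (i + 1), alpha σ ρ m K 0 0 0 *
          (k + N).choose N * A⁻¹ ^ k * (k.choose i * x ^ (k - i) * (i.choose n * c⁻¹ ^ i)) := by
        refine Finset.sum_le_sum fun i hi => Finset.sum_le_sum fun n hn => ?_
        rw [Finset.mem_range, Nat.lt_succ_iff] at hi hn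
        rw [alpha_mul_factorial_mul_pow hσ hρ0 hρ1 hn hi]
        gcongr
        · exact hα 0 0 0
        · exact (poch_div_factorial_le_choose hm hmN _).trans
            (by exact_mod_cast Nat.choose_le_choose N (by omega))
    _ = alpha σ ρ m K 0 0 0 * (k + N).choose N * A⁻¹ ^ k * (2 / c + x) ^ k := by
        rw [add_pow, Finset.mul_sum]
        refine Finset.sum_congr rfl fun i _ => ?_
        rw [← Finset.mul_sum, ← Finset.mul_sum, ← Finset.sum_mul, ← Nat.cast_sum,
          Nat.sum_range_choose]
        push_cast
        ring
    _ = _ := by rw [div_eq_mul_inv _ A, mul_pow]; ring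

lemma summable_factorial_pow (hσ : σ ≠ 0) (hρ0 : 0 < ρ) (hρ1 : ρ < 1) (hm : 0 < m)
    (hK : 0 ≤ K) :
    Summable (alphaSum σ ρ m K fun n q => n ! * (σ ^ 2 * (1 - ρ)) ^ n *
      (q ! * (σ ^ 2 * (1 - ρ)) ^ q)) := by
  have hα := alpha_nonneg (σ := σ) hρ0.le hρ1.le hm.le hK
  have h1 : 0 < 1 - ρ := by linarith
  have hr := alpha_ratio_lt_one hσ hρ0 hρ1 hm hK
  have hgeom := summable_choose_mul_geometric_of_norm_lt_one ⌈m⌉₊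
    ((Real.norm_of_nonneg (by positivity)).trans_lt hr)
  refine .of_nonneg_of_le (nonneg hα fun n q => by positivity)
    (factorial_pow_le hσ hρ0 hρ1 hm.le hK (N := ⌈m⌉₊) (by linarith [Nat.le_ceil m]))
    (hgeom.mul_left _)

lemma summable_mul_of_le (hσ : σ ≠ 0) (hρ0 : 0 < ρ) (hρ1 : ρ < 1) (hm : 0 < m) (hK : 0 ≤ K)
    {a b : ℕ → ℝ} {s t : ℝ} (ha0 : ∀ n, 0 ≤ a n)
    (ha : ∀ n, a n ≤ s * (n ! * (σ ^ 2 * (1 - ρ)) ^ n))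
    (hb0 : ∀ q, 0 ≤ b q) (hb : ∀ q, b q ≤ t * (q ! * (σ ^ 2 * (1 - ρ)) ^ q)) :
    Summable (alphaSum σ ρ m K fun n q => a n * b q) := by
  have hα := alpha_nonneg (σ := σ) hρ0.le hρ1.le hm.le hK
  refine .of_nonneg_of_le (nonneg hα fun n q => mul_nonneg (ha0 n) (hb0 q)) (fun k => ?_)
    ((summable_factorial_pow hσ hρ0 hρ1 hm hK).mul_left (s * t))
  simp only [alphaSum, Finset.mul_sum]
  refine Finset.sum_le_sum fun i _ => Finset.sum_le_sum fun n _ => ?_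
  calc alpha σ ρ m K k i n * (a n * b (i - n))
      ≤ alpha σ ρ m K k i n * (s * (n ! * (σ ^ 2 * (1 - ρ)) ^ n) *
          (t * ((i - n)! * (σ ^ 2 * (1 - ρ)) ^ (i - n)))) := by
        gcongr
        exacts [hα k i n, hb0 _, (ha0 n).trans (ha n), ha n, hb _]
    _ = s * t * (alpha σ ρ m K k i n *
          (n ! * (σ ^ 2 * (1 - ρ)) ^ n * ((i - n)! * (σ ^ 2 * (1 - ρ)) ^ (i - n)))) := by ring

lemma hasSum_integral (hα : ∀ k i n, 0 ≤ alpha σ ρ m K k i n) {X : Type*} [MeasurableSpace X]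
    {μ : Measure X} {f : ℕ → ℕ → X → ℝ} (hf : ∀ n q, Integrable (f n q) μ)
    (hf0 : ∀ n q, 0 ≤ᵐ[μ] f n q)
    (hs : Summable (alphaSum σ ρ m K fun n q => ∫ x, f n q x ∂μ)) :
    HasSum (alphaSum σ ρ m K fun n q => ∫ x, f n q x ∂μ)
      (∫ x, ∑' k, alphaSum σ ρ m K (fun n q => f n q x) k ∂μ) := by
  have hint (k : ℕ) : Integrable (fun x => alphaSum σ ρ m K (fun n q => f n q x) k) μ :=
    integrable_finsetSum _ fun i _ => integrable_finsetSum _ fun n _ => (hf n _).const_mul _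
  have hintegral (k : ℕ) : ∫ x, alphaSum σ ρ m K (fun n q => f n q x) k ∂μ
      = alphaSum σ ρ m K (fun n q => ∫ x, f n q x ∂μ) k := by
    simp only [alphaSum]
    rw [integral_finsetSum _ fun i _ => integrable_finsetSum _ fun n _ => (hf n _).const_mul _]
    refine Finset.sum_congr rfl fun i _ => ?_
    rw [integral_finsetSum _ fun n _ => (hf n _).const_mul _]
    simp only [integral_const_mul]
  have hnorm (k : ℕ) : ∫ x, ‖alphaSum σ ρ m K (fun n q => f n q x) k‖ ∂μ
      = ∫ x, alphaSum σ ρ m K (fun n q => f n q x) k ∂μ := by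
    refine integral_congr_ae ?_
    filter_upwards [ae_all_iff.2 fun n => ae_all_iff.2 (hf0 n)] with x hx
    exact Real.norm_of_nonneg (nonneg hα hx k)
  simpa only [hintegral] using
    hasSum_integral_of_summable_integral_norm hint (by simpa only [hnorm, hintegral] using hs)

end alphaSum

section fpdf

variable {σ ρ m K : ℝ}

lemma fpdf_eq_tsum_alphaSum (σ ρ m K r₁ r₂ : ℝ) :
    fpdf σ ρ m K r₁ r₂ = ∑' k, alphaSum σ ρ m K (fun n q =>
      gaussOddPow (σ ^ 2 * (1 - ρ)) n r₁ * gaussOddPow (σ ^ 2 * (1 - ρ)) q r₂) k := by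
  simp only [fpdf, alphaSum, gaussOddPow, neg_add, add_div, Real.exp_add]
  refine tsum_congr fun k => Finset.sum_congr rfl fun i _ => Finset.sum_congr rfl fun n _ => ?_
  ring

lemma intervalIntegral_fpdf (hσ : σ ≠ 0) (hρ0 : 0 < ρ) (hρ1 : ρ < 1) (hm : 0 < m) (hK : 0 ≤ K)
    {γ : ℝ} (hγ : 0 ≤ γ) {r₂ : ℝ} (hr₂ : 0 ≤ r₂) :
    ∫ r₁ in 0..γ, fpdf σ ρ m K r₁ r₂ = ∑' k, alphaSum σ ρ m K (fun n q =>
      (∫ r in 0..γ, gaussOddPow (σ ^ 2 * (1 - ρ)) n r) *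
        gaussOddPow (σ ^ 2 * (1 - ρ)) q r₂) k := by
  have hc : 0 < σ ^ 2 * (1 - ρ) := mul_pos (by positivity) (by linarith)
  have hsum := alphaSum.summable_mul_of_le hσ hρ0 hρ1 hm hK
    (s := σ ^ 2 * (1 - ρ) / 2) (t := r₂)
    (fun n => intervalIntegral.integral_nonneg hγ fun r hr => gaussOddPow.nonneg n hr.1)
    (fun n => (gaussOddPow.intervalIntegral_le hc hγ n).trans_eq (by ring))
    (fun q => gaussOddPow.nonneg q hr₂)
    (fun q => (gaussOddPow.le_factorial_mul hc q hr₂).trans_eq (by ring))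
  simp_rw [fpdf_eq_tsum_alphaSum, intervalIntegral.integral_of_le hγ, ← integral_mul_const]
    at hsum ⊢
  exact (alphaSum.hasSum_integral (alpha_nonneg hρ0.le hρ1.le hm.le hK)
    (fun n q => ((gaussOddPow.continuous n).integrableOn_Ioc).mul_const _)
    (fun n q => (ae_restrict_iff' measurableSet_Ioc).2 (.of_forall fun r hr =>
      mul_nonneg (gaussOddPow.nonneg n hr.1.le) (gaussOddPow.nonneg q hr₂)))
    hsum).tsum_eq.symm

lemma summable_alphaSum_integral (hσ : σ ≠ 0) (hρ0 : 0 < ρ) (hρ1 : ρ < 1) (hm : 0 < m)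
    (hK : 0 ≤ K) {γ : ℝ} (hγ : 0 ≤ γ) :
    Summable (alphaSum σ ρ m K fun n q => (∫ r in 0..γ, gaussOddPow (σ ^ 2 * (1 - ρ)) n r) *
      ∫ r in Ioi 0, gaussOddPow (σ ^ 2 * (1 - ρ)) q r) := by
  have hc : 0 < σ ^ 2 * (1 - ρ) := mul_pos (by positivity) (by linarith)
  exact alphaSum.summable_mul_of_le hσ hρ0 hρ1 hm hK
    (s := σ ^ 2 * (1 - ρ) / 2) (t := σ ^ 2 * (1 - ρ) / 2)
    (fun n => intervalIntegral.integral_nonneg hγ fun r hr => gaussOddPow.nonneg n hr.1)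
    (fun n => (gaussOddPow.intervalIntegral_le hc hγ n).trans_eq (by ring))
    (fun q => setIntegral_nonneg measurableSet_Ioi fun r hr => gaussOddPow.nonneg q hr.le)
    (fun q => ((gaussOddPow.integral_Ioi hc q).trans (by ring)).le)

lemma integral_Ioi_intervalIntegral_fpdf (hσ : σ ≠ 0) (hρ0 : 0 < ρ) (hρ1 : ρ < 1) (hm : 0 < m)
    (hK : 0 ≤ K) {γ : ℝ} (hγ : 0 ≤ γ) :
    ∫ r₂ in Ioi 0, ∫ r₁ in 0..γ, fpdf σ ρ m K r₁ r₂
      = ∑' k, alphaSum σ ρ m K (fun n q => (∫ r in 0..γ, gaussOddPow (σ ^ 2 * (1 - ρ)) n r) *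
          ∫ r in Ioi 0, gaussOddPow (σ ^ 2 * (1 - ρ)) q r) k := by
  have hc : 0 < σ ^ 2 * (1 - ρ) := mul_pos (by positivity) (by linarith)
  have hsum := summable_alphaSum_integral hσ hρ0 hρ1 hm hK hγ
  rw [setIntegral_congr_fun measurableSet_Ioi fun r₂ hr₂ =>
    intervalIntegral_fpdf hσ hρ0 hρ1 hm hK hγ hr₂.le]
  simp_rw [← integral_const_mul] at hsum ⊢
  exact (alphaSum.hasSum_integral (alpha_nonneg hρ0.le hρ1.le hm.le hK)
    (fun n q => (gaussOddPow.integrableOn_Ioi hc q).const_mul _)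
    (fun n q => (ae_restrict_iff' measurableSet_Ioi).2 (.of_forall fun r hr =>
      mul_nonneg (intervalIntegral.integral_nonneg hγ fun r hr => gaussOddPow.nonneg n hr.1)
        (gaussOddPow.nonneg q hr.le)))
    hsum).tsum_eq.symm

end fpdf

theorem marginal_cdf_R1_series (σ ρ m K γ : ℝ)
    (hσ : 0 < σ) (hρ0 : 0 < ρ) (hρ1 : ρ < 1) (hm : 0 < m) (hK : 0 < K) (hγ : 0 ≤ γ) :
    Summable (fun k : ℕ => ∑ i ∈ Finset.range (k + 1), ∑ n ∈ Finset.range (i + 1),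
      ∑' j : ℕ, alpha σ ρ m K k i n * Gfun σ ρ j n (i - n) γ) ∧
    (∫ r₂ in Set.Ioi (0 : ℝ), ∫ r₁ in (0 : ℝ)..γ, fpdf σ ρ m K r₁ r₂) =
      ∑' k : ℕ, ∑ i ∈ Finset.range (k + 1), ∑ n ∈ Finset.range (i + 1),
        ∑' j : ℕ, alpha σ ρ m K k i n * Gfun σ ρ j n (i - n) γ := by
  have hc : 0 < σ ^ 2 * (1 - ρ) := mul_pos (by positivity) (by linarith)
  have hseries (k : ℕ) : ∑ i ∈ Finset.range (k + 1), ∑ n ∈ Finset.range (i + 1),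
      ∑' j : ℕ, alpha σ ρ m K k i n * Gfun σ ρ j n (i - n) γ
      = alphaSum σ ρ m K (fun n q => (∫ r in 0..γ, gaussOddPow (σ ^ 2 * (1 - ρ)) n r) *
          ∫ r in Ioi 0, gaussOddPow (σ ^ 2 * (1 - ρ)) q r) k := by
    simp only [alphaSum, tsum_mul_left, (hasSum_Gfun hc hγ _ _).tsum_eq]
  simp only [hseries]
  exact ⟨summable_alphaSum_integral hσ.ne' hρ0 hρ1 hm hK.le hγ,
    integral_Ioi_intervalIntegral_fpdf hσ.ne' hρ0 hρ1 hm hK.le hγ⟩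
end

section
/- Let K > 0, m > 0, P > 0, and γ ≥ 0. Then the CDF of the Rician shadowed power distribution satisfies ∫₀^γ (m/(K+m))^m · ((1+K)/P) · exp(−(1+K)x/P) · ₁F₁(m,1; K(1+K)x/((K+m)P)) dx = ∑_{k=0}^∞ ∑_{i=0}^{k} (−1)^{k−i} (m/(K+m))^m · ((m)_i/(i!)²) · (K/(K+m))^i · ((1+K)/P)^{k+1} · γ^{k+1}/((k−i)!(k+1)), where the outer series converges. -/
/-- Rician shadowed power PDF with Rician factor `K`, shadowing parameter `m`,
and normalized power `P`. -/
noncomputable def fX (K m P x : ℝ) : ℝ :=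
  Real.rpow (m / (K + m)) m * ((1 + K) / P) * Real.exp (-(1 + K) * x / P) *
    F11 m (K * (1 + K) * x / ((K + m) * P))

/-- Series coefficient `ᾱ(k,i,P,γ)` of the Rician shadowed power CDF. -/
noncomputable def alphaBar (K m : ℝ) (k i : ℕ) (P γ : ℝ) : ℝ :=
  (-1 : ℝ) ^ (k - i) * Real.rpow (m / (K + m)) m * (poch m i / (Nat.factorial i : ℝ) ^ 2) *
    (K / (K + m)) ^ i * ((1 + K) / P) ^ (k + 1) * γ ^ (k + 1) /
    ((Nat.factorial (k - i) : ℝ) * ((k : ℝ) + 1))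

/-! With `C = (m / (K + m))^m`, `b = (1 + K) / P` and `c = K b / (K + m)`,
`fX x = C b ₁F₁(m, 1; c x) e^{-b x}`.
Since `|(m)_n| ≤ (1 + |m|)ⁿ n!`, the `₁F₁` series is dominated by an exponential series, so
both factors are entire power series and their Cauchy product is a power series `∑ d_k x^k`
for `fX` converging absolutely on all of `ℝ`. Integrating it termwise over `[0, γ]` is dominated
convergence with the constant majorants `|d_k| |γ|^k`, and the `k`-th integrated term
`d_k γ^{k+1} / (k + 1)` is `∑_{i ≤ k} ᾱ(k, i)`. -/

open Finset Nat

theorem abs_poch_le_pow_mul_factorial (m : ℝ) (k : ℕ) : |poch m k| ≤ (1 + |m|) ^ k * k ! := by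
  calc |poch m k| = ∏ j ∈ range k, |m + j| := by rw [poch, abs_prod]
    _ ≤ ∏ j ∈ range k, (1 + |m|) * (j + 1 : ℝ) := by
        gcongr with j
        nlinarith [abs_add_le m j, abs_nonneg m, Nat.abs_cast (R := ℝ) j,
          (j.cast_nonneg : (0 : ℝ) ≤ j)]
    _ = (1 + |m|) ^ k * k ! := by
        rw [prod_mul_distrib, prod_const, card_range, ← prod_range_add_one_eq_factorial]
        push_cast; rfl

theorem summable_norm_F11_series (m z : ℝ) :
    Summable fun n : ℕ => ‖poch m n * z ^ n / (n ! : ℝ) ^ 2‖ := by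
  refine (Real.summable_pow_div_factorial ((1 + |m|) * |z|)).of_nonneg_of_le
    (fun _ => norm_nonneg _) fun n => ?_
  have hfac : (0 : ℝ) < n ! := by positivity
  rw [norm_div, norm_mul, norm_pow, Real.norm_eq_abs, Real.norm_eq_abs, norm_pow,
    Real.norm_natCast, mul_pow, div_le_div_iff₀ (by positivity) hfac]
  calc |poch m n| * |z| ^ n * n ! ≤ (1 + |m|) ^ n * n ! * |z| ^ n * n ! := by
        gcongr; exact abs_poch_le_pow_mul_factorial m n
    _ = (1 + |m|) ^ n * |z| ^ n * (n ! : ℝ) ^ 2 := by ring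

theorem hasSum_F11 (m z : ℝ) :
    HasSum (fun n : ℕ => poch m n * z ^ n / (n ! : ℝ) ^ 2) (F11 m z) :=
  (summable_norm_F11_series m z).of_norm.hasSum

theorem hasSum_F11_mul (m c x : ℝ) :
    HasSum (fun n : ℕ => poch m n * c ^ n / (n ! : ℝ) ^ 2 * x ^ n) (F11 m (c * x)) := by
  simpa only [mul_pow, mul_div_right_comm, mul_assoc] using hasSum_F11 m (c * x)

theorem summable_norm_F11_mul (m c x : ℝ) :
    Summable fun n : ℕ => ‖poch m n * c ^ n / (n ! : ℝ) ^ 2 * x ^ n‖ := by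
  simpa only [mul_pow, mul_div_right_comm, mul_assoc] using summable_norm_F11_series m (c * x)

theorem Real.hasSum_exp_mul (b x : ℝ) :
    HasSum (fun n : ℕ => b ^ n / n ! * x ^ n) (Real.exp (b * x)) := by
  have h : HasSum (fun n : ℕ => (b * x) ^ n / n !) (Real.exp (b * x)) := by
    rw [Real.exp_eq_exp_ℝ]; exact NormedSpace.expSeries_div_hasSum_exp (b * x)
  simpa only [mul_pow, mul_div_right_comm] using h

theorem Real.summable_norm_exp_mul (b x : ℝ) :
    Summable fun n : ℕ => ‖b ^ n / n ! * x ^ n‖ := by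
  simpa [abs_mul, mul_pow, div_mul_eq_mul_div] using Real.summable_pow_div_factorial (|b| * |x|)

section CauchyProduct

variable {R : Type*} [NormedCommRing R] {a e : ℕ → R} {x : R}

theorem sum_range_mul_mul_pow (k : ℕ) :
    (∑ i ∈ range (k + 1), a i * e (k - i)) * x ^ k =
      ∑ i ∈ range (k + 1), a i * x ^ i * (e (k - i) * x ^ (k - i)) := by
  rw [sum_mul]
  refine sum_congr rfl fun i hi => ?_
  rw [← pow_mul_pow_sub x (Nat.le_of_lt_succ (mem_range.1 hi))]
  ring

theorem summable_norm_cauchyProduct_mul_pow (ha : Summable fun i => ‖a i * x ^ i‖)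
    (he : Summable fun j => ‖e j * x ^ j‖) :
    Summable fun k => ‖(∑ i ∈ range (k + 1), a i * e (k - i)) * x ^ k‖ := by
  simpa only [sum_range_mul_mul_pow] using summable_norm_sum_mul_range_of_summable_norm ha he

theorem hasSum_cauchyProduct_mul_pow_s11 [CompleteSpace R] (ha : Summable fun i => ‖a i * x ^ i‖)
    (he : Summable fun j => ‖e j * x ^ j‖) :
    HasSum (fun k => (∑ i ∈ range (k + 1), a i * e (k - i)) * x ^ k)
      ((∑' i, a i * x ^ i) * ∑' j, e j * x ^ j) := by
  simpa only [sum_range_mul_mul_pow] using hasSum_sum_range_mul_of_summable_norm ha he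

end CauchyProduct

theorem abs_le_abs_of_mem_uIoc_zero {t γ : ℝ} (ht : t ∈ Set.uIoc 0 γ) : |t| ≤ |γ| := by
  rcases Set.mem_uIoc.1 ht with ⟨h₁, h₂⟩ | ⟨h₁, h₂⟩ <;>
    exact abs_le.2 ⟨by linarith [neg_abs_le γ, abs_nonneg γ],
      by linarith [le_abs_self γ, abs_nonneg γ]⟩

theorem hasSum_intervalIntegral_of_hasSum_mul_pow {d : ℕ → ℝ} {f : ℝ → ℝ} {γ : ℝ}
    (hd : Summable fun k => ‖d k * γ ^ k‖)
    (hf : ∀ x ∈ Set.uIoc 0 γ, HasSum (fun k => d k * x ^ k) (f x)) :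
    HasSum (fun k : ℕ => d k * (γ ^ (k + 1) / (k + 1))) (∫ x in (0 : ℝ)..γ, f x) := by
  have h := intervalIntegral.hasSum_integral_of_dominated_convergence (μ := MeasureTheory.volume)
    (fun k _ => ‖d k * γ ^ k‖)
    (fun k => (by fun_prop : Continuous fun x : ℝ => d k * x ^ k).aestronglyMeasurable)
    (fun k => Filter.Eventually.of_forall fun t ht => ?_)
    (Filter.Eventually.of_forall fun _ _ => hd) intervalIntegrable_const
    (Filter.Eventually.of_forall hf)
  · simpa [integral_pow] using h
  · rw [norm_mul, norm_mul, norm_pow, norm_pow, Real.norm_eq_abs t, Real.norm_eq_abs γ]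
    gcongr ?_ * ?_ ^ _
    exact abs_le_abs_of_mem_uIoc_zero ht

noncomputable def fXCoeff (K m P : ℝ) (k : ℕ) : ℝ :=
  Real.rpow (m / (K + m)) m * ((1 + K) / P) *
    ∑ i ∈ range (k + 1), poch m i * (K / (K + m) * ((1 + K) / P)) ^ i / (i ! : ℝ) ^ 2 *
      ((-((1 + K) / P)) ^ (k - i) / (k - i) !)

theorem summable_norm_fXCoeff_mul_pow (K m P x : ℝ) :
    Summable fun k => ‖fXCoeff K m P k * x ^ k‖ := by
  simpa only [fXCoeff, mul_assoc, norm_mul] using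
    (summable_norm_cauchyProduct_mul_pow (summable_norm_F11_mul m _ x)
      (Real.summable_norm_exp_mul _ x)).mul_left ‖Real.rpow (m / (K + m)) m * ((1 + K) / P)‖

theorem hasSum_fX (K m P x : ℝ) : HasSum (fun k => fXCoeff K m P k * x ^ k) (fX K m P x) := by
  have h := (hasSum_cauchyProduct_mul_pow_s11 (summable_norm_F11_mul m (K / (K + m) * ((1 + K) / P)) x)
    (Real.summable_norm_exp_mul (-((1 + K) / P)) x)).mul_left
      (Real.rpow (m / (K + m)) m * ((1 + K) / P))
  rw [(hasSum_F11_mul _ _ x).tsum_eq, (Real.hasSum_exp_mul _ x).tsum_eq] at h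
  have hfX : fX K m P x = Real.rpow (m / (K + m)) m * ((1 + K) / P) *
      (F11 m (K / (K + m) * ((1 + K) / P) * x) * Real.exp (-((1 + K) / P) * x)) := by
    rw [fX, div_mul_eq_div_div]
    ring_nf
  simpa only [hfX, fXCoeff, mul_assoc] using h

theorem fXCoeff_mul_eq_sum_alphaBar (K m P γ : ℝ) (k : ℕ) :
    fXCoeff K m P k * (γ ^ (k + 1) / (k + 1)) =
      ∑ i ∈ range (k + 1), alphaBar K m k i P γ := by
  rw [fXCoeff, mul_sum, sum_mul]
  refine sum_congr rfl fun i hi => ?_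
  rw [alphaBar, pow_succ' ((1 + K) / P),
    ← pow_mul_pow_sub ((1 + K) / P) (Nat.le_of_lt_succ (mem_range.1 hi)), neg_pow, mul_pow]
  field_simp

theorem rician_shadowed_power_cdf_series_general (K m P γ : ℝ) :
    Summable (fun k : ℕ => ∑ i ∈ Finset.range (k + 1), alphaBar K m k i P γ) ∧
    (∫ x in (0 : ℝ)..γ, fX K m P x) =
      ∑' k : ℕ, ∑ i ∈ Finset.range (k + 1), alphaBar K m k i P γ := by
  have h := hasSum_intervalIntegral_of_hasSum_mul_pow (summable_norm_fXCoeff_mul_pow K m P γ)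
    fun x _ => hasSum_fX K m P x
  simp only [fXCoeff_mul_eq_sum_alphaBar] at h
  exact ⟨h.summable, h.tsum_eq.symm⟩

theorem rician_shadowed_power_cdf_series (K m P γ : ℝ)
    (hK : 0 < K) (hm : 0 < m) (hP : 0 < P) (hγ : 0 ≤ γ) :
    Summable (fun k : ℕ => ∑ i ∈ Finset.range (k + 1), alphaBar K m k i P γ) ∧
    (∫ x in (0 : ℝ)..γ, fX K m P x) =
      ∑' k : ℕ, ∑ i ∈ Finset.range (k + 1), alphaBar K m k i P γ :=
  rician_shadowed_power_cdf_series_general K m P γ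
end

section
/- Let ρ > 0, K > 0, and j ∈ ℕ. Then, as the real parameter m tends to infinity, (mρ/(mρ+K))^m · (m)_j/(ρm+K)^j converges to exp(−K/ρ)·ρ^{−j}. In particular, the coefficients of the bivariate Rician shadowed series converge to the corresponding bivariate Rician coefficients as the shadowing parameter m → ∞. -/
open Filter Topology Real

theorem tendsto_div_add_rpow_self_atTop (c : ℝ) :
    Tendsto (fun x : ℝ => (x / (x + c)) ^ x) atTop (𝓝 (exp (-c))) := by
  have h := (tendsto_one_add_div_rpow_exp c).inv₀ (exp_ne_zero c)
  rw [← exp_neg] at h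
  refine h.congr' ?_
  filter_upwards [eventually_gt_atTop 0, eventually_ge_atTop (-c)] with x hx hxc
  have hbase : 1 + c / x = ((x / (x + c))⁻¹) := by
    rw [inv_div, add_div, div_self hx.ne']
  rw [hbase, inv_rpow (div_nonneg hx.le (by linarith)), inv_inv]

theorem tendsto_add_div_mul_add_atTop (a b : ℝ) {ρ : ℝ} (hρ : ρ ≠ 0) :
    Tendsto (fun x : ℝ => (x + a) / (ρ * x + b)) atTop (𝓝 ρ⁻¹) := by
  have hlim : Tendsto (fun x : ℝ => (1 + a / x) / (ρ + b / x)) atTop (𝓝 ((1 + 0) / (ρ + 0))) :=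
    ((tendsto_const_nhds.div_atTop tendsto_id).const_add 1).div
      ((tendsto_const_nhds.div_atTop tendsto_id).const_add ρ) (by simpa using hρ)
  rw [add_zero, add_zero, one_div] at hlim
  refine hlim.congr' ?_
  filter_upwards [eventually_ne_atTop 0] with x hx
  field_simp

theorem tendsto_poch_div_mul_add_pow_atTop {ρ : ℝ} (hρ : ρ ≠ 0) (b : ℝ) (j : ℕ) :
    Tendsto (fun m : ℝ => poch m j / (ρ * m + b) ^ j) atTop (𝓝 (ρ ^ j)⁻¹) := by
  unfold poch
  have h : Tendsto (fun m : ℝ => ∏ i ∈ Finset.range j, (m + i) / (ρ * m + b)) atTop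
      (𝓝 (∏ _i ∈ Finset.range j, ρ⁻¹)) :=
    tendsto_finsetProd _ fun i _ => tendsto_add_div_mul_add_atTop i b hρ
  simpa only [Finset.prod_div_distrib, Finset.prod_const, Finset.card_range, inv_pow] using h

theorem shadowed_coeff_limit_general (ρ K : ℝ) (hρ : 0 < ρ) (j : ℕ) :
    Filter.Tendsto
      (fun m : ℝ => Real.rpow (m * ρ / (m * ρ + K)) m * poch m j / (ρ * m + K) ^ j)
      Filter.atTop (nhds (Real.exp (-K / ρ) / ρ ^ j)) := by
  have hbase (m : ℝ) : m * ρ / (m * ρ + K) = m / (m + K / ρ) := by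
    rw [← mul_div_mul_right m (m + K / ρ) hρ.ne', add_mul, div_mul_cancel₀ K hρ.ne']
  have h := (tendsto_div_add_rpow_self_atTop (K / ρ)).mul
    (tendsto_poch_div_mul_add_pow_atTop hρ.ne' K j)
  rw [← div_eq_mul_inv, ← neg_div] at h
  refine h.congr fun m => ?_
  rw [rpow_eq_pow, hbase, mul_div_assoc]

theorem shadowed_coeff_limit (ρ K : ℝ) (hρ : 0 < ρ) (hK : 0 < K) (j : ℕ) :
    Filter.Tendsto
      (fun m : ℝ => Real.rpow (m * ρ / (m * ρ + K)) m * poch m j / (ρ * m + K) ^ j)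
      Filter.atTop (nhds (Real.exp (-K / ρ) / ρ ^ j)) :=
  shadowed_coeff_limit_general ρ K hρ j
end
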